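/- Let Ω ⊆ ℝⁿ be open, let h: ℝⁿ → ℝᵖ be C² whose Jacobian Dh(x) has rank p at every x ∈ Ω (1 ≤ p ≤ n), let P be a C¹ map from ℝⁿ to the real symmetric positive definite n×n matrices, and let Q be a C¹ map from ℝᵖ to the real symmetric positive definite p×p matrices. Define P_mod on Ω by P_mod(x) = P(x) + Dh(x)ᵀ·(Q(h(x)) − (Dh(x)·P(x)⁻¹·Dh(x)ᵀ)⁻¹)·Dh(x), a C¹ map with symmetric positive definite values, and let Γ and Γ_mod denote the Christoffel symbols of P and of P_mod. Then the following are equivalent: (i) for all x ∈ Ω, all i ∈ {1,…,p} and all v ∈ ℝⁿ with Dh(x)·v = 0, Σ_{a,b} v_a·v_b·(∂²h_i/∂x_a∂x_b(x) − Σ_c Γ^c_{ab}(x)·∂h_i/∂x_c(x)) = 0; (ii) the same statement with Γ replaced by Γ_mod. -/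

import Mathlib

/-!
Fix `x` and a vector `v` tangent to the level set, `Dh(x) v = 0`. For any metric `M`, the
contracted Christoffel symbols are `Γ(v,v) = M(x)⁻¹ G_M`, where
`G_M,d = D_v (vᵀ M e_d) - ½ ∂_d (vᵀ M v)`, so the vector of tangential Hessians is
`T_M = H - Dh · M⁻¹ G_M` with `H_i = vᵀ (∂²h_i) v`.

For `N = P + Dhᵀ S Dh` the correction terms in `G_N` all contain a factor `Dh(y) v`, which
vanishes at `y = x`; only the one in which that factor is differentiated survives, so
`G_N = G_P + Dhᵀ S H`. With `A = Dh P⁻¹ Dhᵀ` and `S = Q - A⁻¹` one has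
`Dh P⁻¹ N = A Q Dh`, hence `Dh N⁻¹ = (AQ)⁻¹ Dh P⁻¹` and `Dh N⁻¹ Dhᵀ = Q⁻¹`. Substituting gives
`T_N = Q⁻¹ A⁻¹ T_P`, and `Q⁻¹ A⁻¹` is invertible because `A` is positive definite when
`Dh(x)` has full rank.
-/

open Matrix

/-- Partial derivative `∂g/∂x_a (x)` of a real-valued function on `ℝ^ι`. -/
noncomputable def pdv {ι : Type*} [Fintype ι] [DecidableEq ι]
    (g : (ι → ℝ) → ℝ) (a : ι) (x : ι → ℝ) : ℝ :=
  fderiv ℝ g x (Pi.single a 1)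

/-- Jacobian matrix `Dh(x)` of `h : ℝ^ι → ℝ^κ`. -/
noncomputable def jacobianM {ι κ : Type*} [Fintype ι] [DecidableEq ι] [Fintype κ]
    (h : (ι → ℝ) → (κ → ℝ)) (x : ι → ℝ) : Matrix κ ι ℝ :=
  Matrix.of fun i a => fderiv ℝ h x (Pi.single a 1) i

/-- Christoffel symbols `Γ^c_{ab}(x)` of a matrix-valued metric `P`. -/
noncomputable def christoffelSym {ι : Type*} [Fintype ι] [DecidableEq ι]
    (P : (ι → ℝ) → Matrix ι ι ℝ) (c a b : ι) (x : ι → ℝ) : ℝ :=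
  (1 / 2) * ∑ d, (P x)⁻¹ c d *
    (pdv (fun y => P y a d) b x + pdv (fun y => P y b d) a x - pdv (fun y => P y a b) d x)

/-- The tangential-Hessian condition: for all `x ∈ Ω`, all components `i` of `h`, and all
`v` with `Dh(x)·v = 0`, `Σ_{a,b} v_a·v_b·(∂²h_i/∂x_a∂x_b − Σ_c Γ^c_{ab}·∂h_i/∂x_c) = 0`. -/
def TangentHessianZero {n p : ℕ} (h : (Fin n → ℝ) → (Fin p → ℝ))
    (M : (Fin n → ℝ) → Matrix (Fin n) (Fin n) ℝ) (Ω : Set (Fin n → ℝ)) : Prop :=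
  ∀ x ∈ Ω, ∀ (i : Fin p) (v : Fin n → ℝ), (jacobianM h x).mulVec v = 0 →
    ∑ a, ∑ b, v a * v b *
      (pdv (fun y => pdv (fun z => h z i) b y) a x
        - ∑ c, christoffelSym M c a b x * pdv (fun y => h y i) c x) = 0

section Calculus

variable {ι : Type*} [Fintype ι] [DecidableEq ι]
  {E : Type*} [NormedAddCommGroup E] [NormedSpace ℝ E]

lemma fderiv_sum_mul {κ : Type*} [Fintype κ] {f : κ → E → ℝ} {x : E}
    (hf : ∀ k, DifferentiableAt ℝ (f k) x) (w : κ → ℝ) (u : E) :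
    fderiv ℝ (fun y => ∑ k, w k * f k y) x u = ∑ k, w k * fderiv ℝ (f k) x u := by
  rw [fderiv_fun_sum fun k _ => (hf k).const_mul (w k)]
  simp [fderiv_const_mul (hf _)]

lemma fderiv_dotProduct_of_eq_zero {κ : Type*} [Fintype κ] {u g : E → κ → ℝ} {x : E}
    (hu : ∀ k, DifferentiableAt ℝ (fun y => u y k) x)
    (hg : ∀ k, DifferentiableAt ℝ (fun y => g y k) x) (hux : u x = 0) (w : E) :
    fderiv ℝ (fun y => u y ⬝ᵥ g y) x w = (fun k => fderiv ℝ (fun y => u y k) x w) ⬝ᵥ g x := by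
  simp only [dotProduct]
  rw [fderiv_fun_sum (A := fun k y => u y k * g y k) fun k _ => (hu k).mul (hg k)]
  simp [fderiv_fun_mul (hu _) (hg _), hux, mul_comm]

lemma fderiv_apply_eq_sum_pdv (g : (ι → ℝ) → ℝ) (x v : ι → ℝ) :
    fderiv ℝ g x v = ∑ b, v b * pdv g b x := by
  conv_lhs => rw [pi_eq_sum_univ' v]
  simp [pdv]

lemma differentiableAt_mul_apply {l m o : Type*} [Fintype m] {M : E → Matrix l m ℝ}
    {N : E → Matrix m o ℝ} {x : E} (hM : ∀ i j, DifferentiableAt ℝ (fun y => M y i j) x)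
    (hN : ∀ i j, DifferentiableAt ℝ (fun y => N y i j) x) (i : l) (k : o) :
    DifferentiableAt ℝ (fun y => (M y * N y) i k) x := by
  simp only [mul_apply]
  exact DifferentiableAt.fun_sum fun j _ => (hM i j).mul (hN j k)

lemma differentiableAt_det {m : Type*} [Fintype m] [DecidableEq m] {M : E → Matrix m m ℝ} {x : E}
    (hM : ∀ i j, DifferentiableAt ℝ (fun y => M y i j) x) :
    DifferentiableAt ℝ (fun y => (M y).det) x := by
  simp only [det_apply']
  fun_prop

lemma differentiableAt_inv_apply {m : Type*} [Fintype m] [DecidableEq m]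
    {M : E → Matrix m m ℝ} {x : E}
    (hM : ∀ i j, DifferentiableAt ℝ (fun y => M y i j) x) (hx : (M x).det ≠ 0) (i j : m) :
    DifferentiableAt ℝ (fun y => (M y)⁻¹ i j) x := by
  simp only [inv_def, Matrix.smul_apply, Ring.inverse_eq_inv', smul_eq_mul, adjugate_apply]
  refine ((differentiableAt_det hM).inv hx).mul (differentiableAt_det fun k l => ?_)
  by_cases hk : k = j <;> simp [updateRow_apply, hk, hM]

end Calculus

section Jacobian

variable {ι κ : Type*} [Fintype ι] [DecidableEq ι] [Fintype κ] {h : (ι → ℝ) → (κ → ℝ)}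

lemma jacobianM_apply_eq_pdv {y : ι → ℝ} (hy : DifferentiableAt ℝ h y) (i : κ) (b : ι) :
    jacobianM h y i b = pdv (fun z => h z i) b y := by
  simp [jacobianM, pdv, fderiv_apply hy]

lemma differentiableAt_jacobianM_apply (hh : ContDiff ℝ 2 h) (x : ι → ℝ) (i : κ) (b : ι) :
    DifferentiableAt ℝ (fun y => jacobianM h y i b) x := by
  have : Differentiable ℝ (fderiv ℝ h) :=
    (hh.fderiv_right (m := 1) (by norm_num)).differentiable one_ne_zero
  simp only [jacobianM, of_apply]
  fun_prop

end Jacobian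

section TangentHessian

variable {ι κ : Type*} [Fintype ι] [DecidableEq ι] [Fintype κ]

noncomputable def tangentHessian (h : (ι → ℝ) → (κ → ℝ)) (M : (ι → ℝ) → Matrix ι ι ℝ)
    (x v : ι → ℝ) (i : κ) : ℝ :=
  ∑ a, ∑ b, v a * v b *
    (pdv (fun y => pdv (fun z => h z i) b y) a x
      - ∑ c, christoffelSym M c a b x * pdv (fun y => h y i) c x)

lemma tangentHessianZero_iff {n p : ℕ} {h : (Fin n → ℝ) → (Fin p → ℝ)}
    {M : (Fin n → ℝ) → Matrix (Fin n) (Fin n) ℝ} {Ω : Set (Fin n → ℝ)} :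
    TangentHessianZero h M Ω ↔
      ∀ x ∈ Ω, ∀ v, jacobianM h x *ᵥ v = 0 → tangentHessian h M x v = 0 :=
  ⟨fun H x hx v hv => funext fun i => H x hx i v hv,
    fun H x hx i v hv => congrFun (H x hx v hv) i⟩

noncomputable def hessianAlong (h : (ι → ℝ) → (κ → ℝ)) (x v : ι → ℝ) (i : κ) : ℝ :=
  ∑ a, ∑ b, v a * v b * pdv (fun y => pdv (fun z => h z i) b y) a x

noncomputable def christoffelCovector (M : (ι → ℝ) → Matrix ι ι ℝ) (x v : ι → ℝ) (d : ι) : ℝ :=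
  fderiv ℝ (fun y => (v ᵥ* M y) d) x v - 1 / 2 * pdv (fun y => v ⬝ᵥ (M y *ᵥ v)) d x

lemma sum_sum_mul_pdv_eq_fderiv {g : ι → (ι → ℝ) → ℝ} {x : ι → ℝ}
    (hg : ∀ a, DifferentiableAt ℝ (g a) x) (v : ι → ℝ) :
    ∑ a, ∑ b, v a * v b * pdv (g a) b x = fderiv ℝ (fun y => ∑ a, v a * g a y) x v := by
  simp [fderiv_sum_mul hg, fderiv_apply_eq_sum_pdv (g _), Finset.mul_sum, mul_assoc]

lemma sum_sum_mul_pdv_eq_pdv {g : ι → ι → (ι → ℝ) → ℝ} {x : ι → ℝ}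
    (hg : ∀ a b, DifferentiableAt ℝ (g a b) x) (v : ι → ℝ) (d : ι) :
    ∑ a, ∑ b, v a * v b * pdv (g a b) d x = pdv (fun y => ∑ a, v a * ∑ b, g a b y * v b) d x := by
  have hg' : ∀ a, DifferentiableAt ℝ (fun y => ∑ b, v b * g a b y) x := by fun_prop
  simp only [pdv, mul_comm (g _ _ _)]
  rw [fderiv_sum_mul hg']
  simp only [fderiv_sum_mul (hg _), Finset.mul_sum, mul_assoc]

lemma sum_mul_christoffelSym {M : (ι → ℝ) → Matrix ι ι ℝ} {x : ι → ℝ}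
    (hM : ∀ a b, DifferentiableAt ℝ (fun y => M y a b) x) (v : ι → ℝ) (c : ι) :
    ∑ a, ∑ b, v a * v b * christoffelSym M c a b x
      = ((M x)⁻¹ *ᵥ christoffelCovector M x v) c := by
  have h1 : ∀ d, ∑ a, ∑ b, v a * v b * pdv (fun y => M y a d) b x
      = fderiv ℝ (fun y => (v ᵥ* M y) d) x v := fun d =>
    sum_sum_mul_pdv_eq_fderiv (fun a => hM a d) v
  have h2 : ∀ d, ∑ a, ∑ b, v a * v b * pdv (fun y => M y b d) a x
      = ∑ a, ∑ b, v a * v b * pdv (fun y => M y a d) b x := fun d => by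
    rw [Finset.sum_comm]; simp only [mul_comm (v _) (v _)]
  have h3 : ∀ d, ∑ a, ∑ b, v a * v b * pdv (fun y => M y a b) d x
      = pdv (fun y => v ⬝ᵥ (M y *ᵥ v)) d x := fun d =>
    sum_sum_mul_pdv_eq_pdv (g := fun a b y => M y a b) hM v d
  have hG : christoffelCovector M x v = fun d =>
      ∑ a, ∑ b, v a * v b * pdv (fun y => M y a d) b x
        - 1 / 2 * ∑ a, ∑ b, v a * v b * pdv (fun y => M y a b) d x :=
    funext fun d => by rw [christoffelCovector, h1, h3]
  rw [hG]
  simp only [christoffelSym, mulVec, dotProduct, Finset.mul_sum]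
  rw [(Finset.sum_congr rfl fun _ _ => Finset.sum_comm).trans Finset.sum_comm]
  simp only [← Finset.mul_sum]
  refine Finset.sum_congr rfl fun d _ => ?_
  simp only [mul_add, mul_sub, Finset.sum_add_distrib, Finset.sum_sub_distrib,
    mul_left_comm (v _ * v _), ← Finset.mul_sum, h2]
  ring

lemma tangentHessian_eq {h : (ι → ℝ) → (κ → ℝ)} {M : (ι → ℝ) → Matrix ι ι ℝ} {x : ι → ℝ}
    (hx : DifferentiableAt ℝ h x) (hM : ∀ a b, DifferentiableAt ℝ (fun y => M y a b) x)
    (v : ι → ℝ) :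
    tangentHessian h M x v
      = hessianAlong h x v - jacobianM h x *ᵥ ((M x)⁻¹ *ᵥ christoffelCovector M x v) := by
  funext i
  simp only [tangentHessian, hessianAlong, mul_sub, Finset.sum_sub_distrib, Pi.sub_apply]
  congr 1
  rw [show (M x)⁻¹ *ᵥ christoffelCovector M x v
      = fun c => ∑ a, ∑ b, v a * v b * christoffelSym M c a b x from
    funext fun c => (sum_mul_christoffelSym hM v c).symm]
  simp only [mulVec, dotProduct, jacobianM_apply_eq_pdv hx, Finset.mul_sum]
  rw [(Finset.sum_congr rfl fun _ _ => Finset.sum_comm).trans Finset.sum_comm]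
  exact Finset.sum_congr rfl fun _ _ => Finset.sum_congr rfl fun _ _ =>
    Finset.sum_congr rfl fun _ _ => by ring

end TangentHessian

section ChristoffelCovector

variable {ι κ : Type*} [Fintype ι] [DecidableEq ι] [Fintype κ] {h : (ι → ℝ) → (κ → ℝ)}
  {P : (ι → ℝ) → Matrix ι ι ℝ} {S : (ι → ℝ) → Matrix κ κ ℝ} {x v : ι → ℝ}

lemma differentiableAt_jacobianM_mulVec_apply (hh : ContDiff ℝ 2 h) (i : κ) :
    DifferentiableAt ℝ (fun y => (jacobianM h y *ᵥ v) i) x := by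
  have := differentiableAt_jacobianM_apply hh x i
  simp only [mulVec, dotProduct]
  fun_prop

lemma fderiv_jacobianM_mulVec_apply (hh : ContDiff ℝ 2 h) (i : κ) :
    fderiv ℝ (fun y => (jacobianM h y *ᵥ v) i) x v = hessianAlong h x v i := by
  have hd : Differentiable ℝ h := hh.differentiable (by norm_num)
  simp only [mulVec, dotProduct, mul_comm (jacobianM h _ i _)]
  rw [fderiv_sum_mul (differentiableAt_jacobianM_apply hh x i)]
  simp only [jacobianM_apply_eq_pdv (hd _), fderiv_apply_eq_sum_pdv, hessianAlong, Finset.mul_sum]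
  rw [Finset.sum_comm]
  exact Finset.sum_congr rfl fun _ _ => Finset.sum_congr rfl fun _ _ => by ring

lemma fderiv_vecMul_add_transpose_mul_mul_apply (hh : ContDiff ℝ 2 h)
    (hv : jacobianM h x *ᵥ v = 0) (hP : ∀ a b, DifferentiableAt ℝ (fun y => P y a b) x)
    (hS : ∀ i j, DifferentiableAt ℝ (fun y => S y i j) x) (d : ι) :
    fderiv ℝ (fun y => (v ᵥ* (P y + (jacobianM h y)ᵀ * S y * jacobianM h y)) d) x v
      = fderiv ℝ (fun y => (v ᵥ* P y) d) x v + (hessianAlong h x v ᵥ* (S x * jacobianM h x)) d := by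
  have hJ := differentiableAt_jacobianM_apply hh x
  have hJv := differentiableAt_jacobianM_mulVec_apply (x := x) (v := v) hh
  have hSJ := differentiableAt_mul_apply hS hJ
  have hsplit : ∀ y, v ᵥ* (P y + (jacobianM h y)ᵀ * S y * jacobianM h y)
      = v ᵥ* P y + (jacobianM h y *ᵥ v) ᵥ* (S y * jacobianM h y) := fun y => by
    rw [vecMul_add, Matrix.mul_assoc, ← vecMul_vecMul, vecMul_transpose]
  have hcorr :=
    fderiv_dotProduct_of_eq_zero (g := fun y i => (S y * jacobianM h y) i d) hJv (hSJ · d) hv v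
  simp only [fderiv_jacobianM_mulVec_apply hh] at hcorr
  simp only [hsplit, Pi.add_apply]
  rw [fderiv_fun_add (g := fun y => ((jacobianM h y *ᵥ v) ᵥ* (S y * jacobianM h y)) d)
    (by simp only [vecMul, dotProduct]; fun_prop)
    (DifferentiableAt.fun_sum fun i _ => (hJv i).mul (hSJ i d))]
  exact congrArg _ hcorr

lemma pdv_dotProduct_add_transpose_mul_mul_mulVec (hh : ContDiff ℝ 2 h)
    (hv : jacobianM h x *ᵥ v = 0) (hP : ∀ a b, DifferentiableAt ℝ (fun y => P y a b) x)
    (hS : ∀ i j, DifferentiableAt ℝ (fun y => S y i j) x) (d : ι) :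
    pdv (fun y => v ⬝ᵥ ((P y + (jacobianM h y)ᵀ * S y * jacobianM h y) *ᵥ v)) d x
      = pdv (fun y => v ⬝ᵥ (P y *ᵥ v)) d x := by
  have hJ := differentiableAt_jacobianM_apply hh x
  have hJv := differentiableAt_jacobianM_mulVec_apply (x := x) (v := v) hh
  have hSJv : ∀ i, DifferentiableAt ℝ (fun y => ((S y * jacobianM h y) *ᵥ v) i) x := by
    simp only [mulVec, dotProduct, mul_apply]; fun_prop
  have hsplit : ∀ y, v ⬝ᵥ ((P y + (jacobianM h y)ᵀ * S y * jacobianM h y) *ᵥ v)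
      = v ⬝ᵥ (P y *ᵥ v) + (jacobianM h y *ᵥ v) ⬝ᵥ ((S y * jacobianM h y) *ᵥ v) := fun y => by
    rw [add_mulVec, dotProduct_add, Matrix.mul_assoc, ← mulVec_mulVec,
      dotProduct_mulVec v (jacobianM h y)ᵀ, vecMul_transpose]
  have hcorr := fderiv_dotProduct_of_eq_zero hJv hSJv hv (Pi.single d 1)
  rw [← mulVec_mulVec, hv, mulVec_zero, dotProduct_zero] at hcorr
  simp only [pdv, hsplit]
  rw [fderiv_fun_add (g := fun y => (jacobianM h y *ᵥ v) ⬝ᵥ ((S y * jacobianM h y) *ᵥ v))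
    (by simp only [mulVec, dotProduct]; fun_prop)
    (DifferentiableAt.fun_sum fun i _ => (hJv i).mul (hSJv i)), _root_.add_apply, hcorr, add_zero]

lemma christoffelCovector_add_transpose_mul_mul (hh : ContDiff ℝ 2 h)
    (hv : jacobianM h x *ᵥ v = 0) (hP : ∀ a b, DifferentiableAt ℝ (fun y => P y a b) x)
    (hS : ∀ i j, DifferentiableAt ℝ (fun y => S y i j) x) :
    christoffelCovector (fun y => P y + (jacobianM h y)ᵀ * S y * jacobianM h y) x v
      = christoffelCovector P x v + hessianAlong h x v ᵥ* (S x * jacobianM h x) := by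
  funext d
  simp only [christoffelCovector, Pi.add_apply,
    fderiv_vecMul_add_transpose_mul_mul_apply hh hv hP hS,
    pdv_dotProduct_add_transpose_mul_mul_mulVec hh hv hP hS]
  ring

end ChristoffelCovector

section ModifiedMetric

variable {m k K : Type*} [Fintype m] [Fintype k] [Field K]

lemma vecMul_injective_of_rank_eq {J : Matrix k m K} (hJ : J.rank = Fintype.card k) :
    Function.Injective (fun w => w ᵥ* J) := by
  have hdim := LinearMap.finrank_range_add_finrank_ker Jᵀ.mulVecLin
  rw [← Matrix.rank, rank_transpose, hJ, Module.finrank_fintype_fun_eq_card] at hdim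
  have hker : LinearMap.ker Jᵀ.mulVecLin = ⊥ := Submodule.finrank_eq_zero.mp (by omega)
  intro w₁ w₂ hw
  simp only [← mulVec_transpose] at hw
  exact LinearMap.ker_eq_bot.mp hker hw

lemma posDef_mul_inv_mul_transpose [DecidableEq m] {P : Matrix m m ℝ} {J : Matrix k m ℝ}
    (hP : P.PosDef) (hJ : J.rank = Fintype.card k) : (J * P⁻¹ * Jᵀ).PosDef := by
  simpa [conjTranspose_eq_transpose_of_trivial] using
    hP.inv.mul_mul_conjTranspose_same (vecMul_injective_of_rank_eq hJ)

variable [DecidableEq m] [DecidableEq k]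

noncomputable def modifiedMetric (P : Matrix m m K) (J : Matrix k m K) (Q : Matrix k k K) :
    Matrix m m K :=
  P + Jᵀ * (Q - (J * P⁻¹ * Jᵀ)⁻¹) * J

variable {P : Matrix m m K} {J : Matrix k m K} {Q : Matrix k k K}

lemma mul_inv_mul_modifiedMetric (hP : IsUnit P.det) (hA : IsUnit (J * P⁻¹ * Jᵀ).det) :
    J * P⁻¹ * modifiedMetric P J Q = J * P⁻¹ * Jᵀ * Q * J := by
  rw [modifiedMetric, Matrix.mul_add, nonsing_inv_mul_cancel_right _ _ hP]
  simp only [← Matrix.mul_assoc]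
  rw [Matrix.mul_sub, mul_nonsing_inv _ hA, Matrix.sub_mul, Matrix.one_mul]
  abel

lemma isUnit_det_modifiedMetric (hP : IsUnit P.det) (hA : IsUnit (J * P⁻¹ * Jᵀ).det)
    (hQ : IsUnit Q.det) : IsUnit (modifiedMetric P J Q).det := by
  rw [isUnit_iff_ne_zero]
  intro hdet
  obtain ⟨z, hz0, hz⟩ := exists_mulVec_eq_zero_iff.mpr hdet
  have hAQ : (J * P⁻¹ * Jᵀ * Q).det ≠ 0 := by
    rw [det_mul]; exact (hA.mul hQ).ne_zero
  have hJz : J *ᵥ z = 0 := eq_zero_of_mulVec_eq_zero hAQ (by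
    rw [mulVec_mulVec, ← mul_inv_mul_modifiedMetric hP hA, ← mulVec_mulVec, hz, mulVec_zero])
  refine hz0 (eq_zero_of_mulVec_eq_zero hP.ne_zero ?_)
  rwa [modifiedMetric, add_mulVec, ← mulVec_mulVec, hJz, mulVec_zero, add_zero] at hz

lemma mul_inv_modifiedMetric (hP : IsUnit P.det) (hA : IsUnit (J * P⁻¹ * Jᵀ).det)
    (hQ : IsUnit Q.det) :
    J * (modifiedMetric P J Q)⁻¹ = Q⁻¹ * (J * P⁻¹ * Jᵀ)⁻¹ * (J * P⁻¹) := by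
  have hAQ : IsUnit (J * P⁻¹ * Jᵀ * Q).det := by
    rw [det_mul]; exact hA.mul hQ
  rw [← Matrix.mul_inv_rev]
  symm
  calc (J * P⁻¹ * Jᵀ * Q)⁻¹ * (J * P⁻¹)
      = (J * P⁻¹ * Jᵀ * Q)⁻¹ * (J * P⁻¹ * modifiedMetric P J Q * (modifiedMetric P J Q)⁻¹) := by
        rw [mul_nonsing_inv_cancel_right _ _ (isUnit_det_modifiedMetric hP hA hQ)]
    _ = (J * P⁻¹ * Jᵀ * Q)⁻¹ * (J * P⁻¹ * Jᵀ * Q * (J * (modifiedMetric P J Q)⁻¹)) := by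
        rw [mul_inv_mul_modifiedMetric hP hA, Matrix.mul_assoc (J * P⁻¹ * Jᵀ * Q) J]
    _ = J * (modifiedMetric P J Q)⁻¹ := nonsing_inv_mul_cancel_left _ _ hAQ

lemma mul_inv_modifiedMetric_mul_transpose (hP : IsUnit P.det)
    (hA : IsUnit (J * P⁻¹ * Jᵀ).det) (hQ : IsUnit Q.det) :
    J * (modifiedMetric P J Q)⁻¹ * Jᵀ = Q⁻¹ := by
  rw [mul_inv_modifiedMetric hP hA hQ, Matrix.mul_assoc _ (J * P⁻¹),
    nonsing_inv_mul_cancel_right _ _ hA]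

lemma sub_mulVec_inv_modifiedMetric (hPs : P.IsSymm) (hQs : Q.IsSymm) (hP : IsUnit P.det)
    (hA : IsUnit (J * P⁻¹ * Jᵀ).det) (hQ : IsUnit Q.det) (H : k → K) (G : m → K) :
    H - J *ᵥ ((modifiedMetric P J Q)⁻¹ *ᵥ (G + H ᵥ* ((Q - (J * P⁻¹ * Jᵀ)⁻¹) * J)))
      = (Q⁻¹ * (J * P⁻¹ * Jᵀ)⁻¹) *ᵥ (H - J *ᵥ (P⁻¹ *ᵥ G)) := by
  have hAs : (J * P⁻¹ * Jᵀ)ᵀ = J * P⁻¹ * Jᵀ := by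
    rw [transpose_mul, transpose_mul, transpose_transpose, transpose_nonsing_inv, hPs.eq,
      Matrix.mul_assoc]
  have hvecMul : H ᵥ* ((Q - (J * P⁻¹ * Jᵀ)⁻¹) * J) = Jᵀ *ᵥ ((Q - (J * P⁻¹ * Jᵀ)⁻¹) *ᵥ H) := by
    rw [← vecMul_vecMul, ← mulVec_transpose, ← mulVec_transpose, transpose_sub,
      transpose_nonsing_inv, hAs, hQs.eq]
  rw [hvecMul, mulVec_add, mulVec_add, mulVec_mulVec, mulVec_mulVec, mulVec_mulVec, mulVec_mulVec,
    mul_inv_modifiedMetric_mul_transpose hP hA hQ, mul_inv_modifiedMetric hP hA hQ,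
    Matrix.mul_sub, nonsing_inv_mul _ hQ, sub_mulVec, one_mulVec, mulVec_sub]
  simp only [mulVec_mulVec, Matrix.mul_assoc]
  abel

end ModifiedMetric

lemma tangentHessian_modifiedMetric {ι κ : Type*} [Fintype ι] [DecidableEq ι] [Fintype κ]
    [DecidableEq κ] {h : (ι → ℝ) → (κ → ℝ)} {P : (ι → ℝ) → Matrix ι ι ℝ}
    {Q : (κ → ℝ) → Matrix κ κ ℝ} {x v : ι → ℝ} (hh : ContDiff ℝ 2 h)
    (hP : ∀ a b, DifferentiableAt ℝ (fun y => P y a b) x) (hPs : (P x).IsSymm)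
    (hPpos : (P x).PosDef) (hQ : ∀ i j, DifferentiableAt ℝ (fun z => Q z i j) (h x))
    (hQs : (Q (h x)).IsSymm) (hQpos : (Q (h x)).PosDef)
    (hr : (jacobianM h x).rank = Fintype.card κ) (hv : jacobianM h x *ᵥ v = 0) :
    tangentHessian h (fun y => modifiedMetric (P y) (jacobianM h y) (Q (h y))) x v
      = ((Q (h x))⁻¹ * (jacobianM h x * (P x)⁻¹ * (jacobianM h x)ᵀ)⁻¹) *ᵥ
          tangentHessian h P x v := by
  have hd : Differentiable ℝ h := hh.differentiable (by norm_num)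
  have hJ := differentiableAt_jacobianM_apply hh x
  have hA := posDef_mul_inv_mul_transpose hPpos hr
  have hPinv := differentiableAt_inv_apply hP hPpos.det_pos.ne'
  have hAinv := differentiableAt_inv_apply
    (differentiableAt_mul_apply (differentiableAt_mul_apply hJ hPinv) fun i j => hJ j i)
    hA.det_pos.ne'
  have hS : ∀ i j, DifferentiableAt ℝ (fun y =>
      (Q (h y) - (jacobianM h y * (P y)⁻¹ * (jacobianM h y)ᵀ)⁻¹) i j) x :=
    fun i j => ((hQ i j).comp x (hd x)).sub (hAinv i j)
  have hN : ∀ a b, DifferentiableAt ℝ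
      (fun y => modifiedMetric (P y) (jacobianM h y) (Q (h y)) a b) x := fun a b =>
    (hP a b).add (differentiableAt_mul_apply
      (differentiableAt_mul_apply (fun i j => hJ j i) hS) hJ a b)
  rw [tangentHessian_eq (hd x) hN, tangentHessian_eq (hd x) hP,
    show christoffelCovector (fun y => modifiedMetric (P y) (jacobianM h y) (Q (h y))) x v = _ from
      christoffelCovector_add_transpose_mul_mul hh hv hP hS]
  exact sub_mulVec_inv_modifiedMetric hPs hQs hPpos.det_pos.ne'.isUnit hA.det_pos.ne'.isUnit
    hQpos.det_pos.ne'.isUnit _ _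

theorem stmt_4_general {n p : ℕ}
    (Ω : Set (Fin n → ℝ))
    (h : (Fin n → ℝ) → (Fin p → ℝ)) (hh : ContDiff ℝ 2 h)
    (hrank : ∀ x ∈ Ω, (jacobianM h x).rank = p)
    (P : (Fin n → ℝ) → Matrix (Fin n) (Fin n) ℝ)
    (hPc : ∀ a b, ContDiff ℝ 1 fun x => P x a b)
    (hPsym : ∀ x, (P x).IsSymm) (hPpos : ∀ x, (P x).PosDef)
    (Q : (Fin p → ℝ) → Matrix (Fin p) (Fin p) ℝ)
    (hQc : ∀ i j, ContDiff ℝ 1 fun y => Q y i j)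
    (hQsym : ∀ y, (Q y).IsSymm) (hQpos : ∀ y, (Q y).PosDef) :
    TangentHessianZero h P Ω ↔
      TangentHessianZero h
        (fun x => P x + (jacobianM h x)ᵀ *
          (Q (h x) - (jacobianM h x * (P x)⁻¹ * (jacobianM h x)ᵀ)⁻¹) * jacobianM h x) Ω := by
  change _ ↔ TangentHessianZero h (fun x => modifiedMetric (P x) (jacobianM h x) (Q (h x))) Ω
  rw [tangentHessianZero_iff, tangentHessianZero_iff]
  refine forall₂_congr fun x hx => forall₂_congr fun v hv => ?_
  have hr : (jacobianM h x).rank = Fintype.card (Fin p) := by rw [hrank x hx, Fintype.card_fin]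
  have hB : ((Q (h x))⁻¹ * (jacobianM h x * (P x)⁻¹ * (jacobianM h x)ᵀ)⁻¹).det ≠ 0 := by
    rw [det_mul]
    exact mul_ne_zero (hQpos _).inv.det_pos.ne'
      (posDef_mul_inv_mul_transpose (hPpos x) hr).inv.det_pos.ne'
  rw [tangentHessian_modifiedMetric hh (fun a b => ((hPc a b).differentiable one_ne_zero) x)
    (hPsym x) (hPpos x) (fun i j => ((hQc i j).differentiable one_ne_zero) (h x)) (hQsym _)
    (hQpos _) hr hv]
  exact ⟨fun h0 => by rw [h0, mulVec_zero], eq_zero_of_mulVec_eq_zero hB⟩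

/-- The tangential-Hessian condition holds for the metric `P` on `Ω` iff it holds for the
modified metric `P_mod(x) = P(x) + Dh(x)ᵀ·(Q(h(x)) − (Dh(x)·P(x)⁻¹·Dh(x)ᵀ)⁻¹)·Dh(x)`. -/
theorem stmt_4 {n p : ℕ} (hp1 : 1 ≤ p) (hpn : p ≤ n)
    (Ω : Set (Fin n → ℝ)) (hΩ : IsOpen Ω)
    (h : (Fin n → ℝ) → (Fin p → ℝ)) (hh : ContDiff ℝ 2 h)
    (hrank : ∀ x ∈ Ω, (jacobianM h x).rank = p)
    (P : (Fin n → ℝ) → Matrix (Fin n) (Fin n) ℝ)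
    (hPc : ∀ a b, ContDiff ℝ 1 fun x => P x a b)
    (hPsym : ∀ x, (P x).IsSymm) (hPpos : ∀ x, (P x).PosDef)
    (Q : (Fin p → ℝ) → Matrix (Fin p) (Fin p) ℝ)
    (hQc : ∀ i j, ContDiff ℝ 1 fun y => Q y i j)
    (hQsym : ∀ y, (Q y).IsSymm) (hQpos : ∀ y, (Q y).PosDef) :
    TangentHessianZero h P Ω ↔
      TangentHessianZero h
        (fun x => P x + (jacobianM h x)ᵀ *
          (Q (h x) - (jacobianM h x * (P x)⁻¹ * (jacobianM h x)ᵀ)⁻¹) * jacobianM h x) Ω :=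
  stmt_4_general Ω h hh hrank P hPc hPsym hPpos Q hQc hQsym hQpos
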